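/- arXiv:2209.12514 — 3 statements merged into one kernel-verified Lean document; each statement's English description precedes it below -/
import Mathlib

section
/- If A is an irreducible real n×n matrix with nonnegative off-diagonal entries, then the spectral bound s(A) is an eigenvalue of A of algebraic multiplicity one, and every other eigenvalue λ of A satisfies Re λ < s(A). -/
/-!
Shifting `A` by `c • 1` for large `c` gives a nonnegative irreducible matrix `B` with the same
eigenvectors. By irreducibility, `1 + B` strictly enlarges the positive support of every
nonzero nonnegative vector that is not already positive, so `P = (1 + B) ^ (n - 1)` maps such
vectors to positive ones. Maximising the Collatz–Wielandt function `x ↦ minᵢ (B x)ᵢ / xᵢ` over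
`P` of the standard simplex yields a positive eigenvector `v` of `B`; applied to `Bᵀ` it yields a
positive left eigenvector `w`, with the same eigenvalue `r` because `w ⬝ᵥ v > 0`.

Pairing `|x|` with `w` shows `‖μ‖ ≤ r` for every eigenvalue `μ` of `B`, so after shifting back
`Re μ ≤ r - c`, with equality only for `μ = r - c`; hence `s = r - c`. The eigenspace of `r` is
spanned by `v`, and since `w` annihilates the range of `B - r` while `w ⬝ᵥ v ≠ 0`, there are no
generalised eigenvectors beyond it: the algebraic multiplicity is one.
-/

open Matrix

/-- A matrix is irreducible if there is no nontrivial subset `S` of indices with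
`A i j = 0` for all `i ∈ S`, `j ∉ S`. -/
def MatIrreducible {n : ℕ} (A : Matrix (Fin n) (Fin n) ℝ) : Prop :=
  ¬ ∃ S : Set (Fin n), S.Nonempty ∧ Sᶜ.Nonempty ∧ ∀ i ∈ S, ∀ j ∉ S, A i j = 0

open Finset

section Irreducible

variable {n : ℕ} {A B : Matrix (Fin n) (Fin n) ℝ}

lemma MatIrreducible.exists_ne_zero (hA : MatIrreducible A) {S : Set (Fin n)}
    (hS : S.Nonempty) (hSc : Sᶜ.Nonempty) : ∃ i ∈ S, ∃ j ∉ S, A i j ≠ 0 := by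
  by_contra! h
  exact hA ⟨S, hS, hSc, h⟩

lemma MatIrreducible.transpose (hA : MatIrreducible A) : MatIrreducible Aᵀ := by
  rintro ⟨S, hS, hSc, h⟩
  obtain ⟨i, hi, j, hj, hij⟩ := hA.exists_ne_zero hSc (by rwa [compl_compl])
  exact hij (h j (not_not.mp hj) i hi)

lemma MatIrreducible.of_offDiag_eq (hA : MatIrreducible A)
    (hAB : ∀ i j, i ≠ j → A i j = B i j) : MatIrreducible B := by
  rintro ⟨S, hS, hSc, h⟩
  exact hA ⟨S, hS, hSc, fun i hi j hj => (hAB i j (ne_of_mem_of_not_mem hi hj)).trans (h i hi j hj)⟩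

lemma MatIrreducible.add_smul_one (hA : MatIrreducible A) (c : ℝ) :
    MatIrreducible (A + c • 1) :=
  hA.of_offDiag_eq fun i j hij => by simp [one_apply_ne hij]

end Irreducible

section Nonneg

variable {ι : Type*} [Fintype ι] {B : Matrix ι ι ℝ}

lemma mulVec_nonneg_of_nonneg (hB : ∀ i j, 0 ≤ B i j) {y : ι → ℝ} (hy : 0 ≤ y) :
    0 ≤ B *ᵥ y :=
  fun i => Finset.sum_nonneg fun j _ => mul_nonneg (hB i j) (hy j)

variable [DecidableEq ι]

lemma le_one_add_mulVec (hB : ∀ i j, 0 ≤ B i j) {y : ι → ℝ} (hy : 0 ≤ y) :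
    y ≤ (1 + B) *ᵥ y := by
  rw [add_mulVec, one_mulVec]
  exact le_add_of_nonneg_right (mulVec_nonneg_of_nonneg hB hy)

lemma pow_mulVec_nonneg (hB : ∀ i j, 0 ≤ B i j) {y : ι → ℝ} (hy : 0 ≤ y) (k : ℕ) :
    0 ≤ (1 + B) ^ k *ᵥ y := by
  induction k with
  | zero => simpa using hy
  | succ k ih => rw [pow_succ', ← mulVec_mulVec]; exact ih.trans (le_one_add_mulVec hB ih)

lemma pow_mulVec_eq_smul_of_mulVec_eq_smul {R : Type*} [CommRing R] {M : Matrix ι ι R}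
    {y : ι → R} {c : R} (h : M *ᵥ y = c • y) (k : ℕ) : M ^ k *ᵥ y = c ^ k • y := by
  induction k with
  | zero => simp
  | succ k ih => rw [pow_succ', ← mulVec_mulVec, ih, mulVec_smul, h, smul_smul, pow_succ]

end Nonneg

section Positivity

variable {n : ℕ} {B : Matrix (Fin n) (Fin n) ℝ}

noncomputable def posSupport (y : Fin n → ℝ) : Finset (Fin n) := {i | 0 < y i}

lemma mem_posSupport {y : Fin n → ℝ} {i : Fin n} : i ∈ posSupport y ↔ 0 < y i := by
  simp [posSupport]

lemma posSupport_ssubset_one_add_mulVec (hB : ∀ i j, 0 ≤ B i j) (hirr : MatIrreducible B)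
    {y : Fin n → ℝ} (hy : 0 ≤ y) (hne : (posSupport y).Nonempty) (hnu : posSupport y ≠ univ) :
    posSupport y ⊂ posSupport ((1 + B) *ᵥ y) := by
  have hle := le_one_add_mulVec hB hy
  refine (ssubset_iff_of_subset fun i hi => ?_).2 ?_
  · rw [mem_posSupport] at hi ⊢
    exact hi.trans_le (hle i)
  have hS : {i | ¬ 0 < y i}.Nonempty := by
    obtain ⟨i, hi⟩ := not_forall.1 (mt eq_univ_of_forall hnu)
    exact ⟨i, mt mem_posSupport.2 hi⟩
  have hSc : {i | ¬ 0 < y i}ᶜ.Nonempty :=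
    let ⟨i, hi⟩ := hne; ⟨i, not_not.2 (mem_posSupport.1 hi)⟩
  obtain ⟨i, hi, j, hj, hBij⟩ := hirr.exists_ne_zero hS hSc
  refine ⟨i, mem_posSupport.2 ?_, mt mem_posSupport.1 hi⟩
  replace hj : 0 < y j := not_not.1 hj
  calc 0 < B i j * y j := mul_pos ((hB i j).lt_of_ne' hBij) hj
    _ ≤ (B *ᵥ y) i :=
      single_le_sum (f := fun k => B i k * y k) (fun k _ => mul_nonneg (hB i k) (hy k))
        (mem_univ j)
    _ ≤ (y + B *ᵥ y) i := le_add_of_nonneg_left (hy i)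
    _ = ((1 + B) *ᵥ y) i := by rw [add_mulVec, one_mulVec]

lemma min_le_card_posSupport_pow_mulVec (hB : ∀ i j, 0 ≤ B i j) (hirr : MatIrreducible B)
    {y : Fin n → ℝ} (hy : 0 ≤ y) (hne : (posSupport y).Nonempty) (k : ℕ) :
    min (k + 1) n ≤ #(posSupport ((1 + B) ^ k *ᵥ y)) := by
  have hn : 0 < n := let ⟨i, _⟩ := hne; i.pos
  induction k with
  | zero => simpa using Nat.min_le_left _ _ |>.trans hne.card_pos
  | succ k ih =>
    set z := (1 + B) ^ k *ᵥ y
    have hz0 : 0 ≤ z := pow_mulVec_nonneg hB hy k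
    rw [pow_succ', ← mulVec_mulVec]
    change min (k + 1 + 1) n ≤ #(posSupport ((1 + B) *ᵥ z))
    by_cases hnu : posSupport z = univ
    · have : posSupport ((1 + B) *ᵥ z) = univ := by
        refine eq_univ_of_forall fun i => mem_posSupport.2 ?_
        exact (mem_posSupport.1 (hnu ▸ mem_univ i)).trans_le (le_one_add_mulVec hB hz0 i)
      rw [this, card_univ, Fintype.card_fin]
      exact min_le_right _ _
    · have hz : (posSupport z).Nonempty := by
        rw [← card_pos]; omega
      have := card_lt_card (posSupport_ssubset_one_add_mulVec hB hirr hz0 hz hnu)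
      omega

lemma pow_mulVec_pos (hB : ∀ i j, 0 ≤ B i j) (hirr : MatIrreducible B) {y : Fin n → ℝ}
    (hy : 0 ≤ y) (hy0 : y ≠ 0) (i : Fin n) : 0 < ((1 + B) ^ (n - 1) *ᵥ y) i := by
  have hne : (posSupport y).Nonempty := by
    obtain ⟨j, hj⟩ := Function.ne_iff.1 hy0
    exact ⟨j, mem_posSupport.2 ((hy j).lt_of_ne' hj)⟩
  have hn : 0 < n := let ⟨j, _⟩ := hne; j.pos
  have hcard := min_le_card_posSupport_pow_mulVec hB hirr hy hne (n - 1)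
  rw [Nat.sub_add_cancel hn, min_self] at hcard
  have huniv : posSupport ((1 + B) ^ (n - 1) *ᵥ y) = univ :=
    eq_univ_of_card _ ((card_le_univ _).antisymm (by simpa using hcard))
  exact mem_posSupport.1 (huniv ▸ mem_univ i)

end Positivity

section CollatzWielandt

variable {ι : Type*} [Fintype ι] [Nonempty ι]

noncomputable def collatzWielandt (B : Matrix ι ι ℝ) (x : ι → ℝ) : ℝ :=
  univ.inf' univ_nonempty fun i => (B *ᵥ x) i / x i

variable {B : Matrix ι ι ℝ} {x : ι → ℝ}

lemma collatzWielandt_mul_le (hx : ∀ i, 0 < x i) (i : ι) :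
    collatzWielandt B x * x i ≤ (B *ᵥ x) i :=
  (le_div_iff₀ (hx i)).1 (inf'_le _ (mem_univ i))

lemma lt_collatzWielandt (hx : ∀ i, 0 < x i) {r : ℝ} (h : ∀ i, r * x i < (B *ᵥ x) i) :
    r < collatzWielandt B x :=
  (lt_inf'_iff _).2 fun i _ => (lt_div_iff₀ (hx i)).2 (h i)

lemma collatzWielandt_smul {c : ℝ} (hc : 0 < c) (x : ι → ℝ) :
    collatzWielandt B (c • x) = collatzWielandt B x := by
  simp only [collatzWielandt, mulVec_smul, Pi.smul_apply, smul_eq_mul,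
    mul_div_mul_left _ _ hc.ne']

lemma continuousOn_collatzWielandt : ContinuousOn (collatzWielandt B) {x | ∀ i, 0 < x i} :=
  ContinuousOn.finset_inf'_apply _ fun i _ =>
    ((continuous_apply i).comp (continuous_const.matrix_mulVec continuous_id)).continuousOn.div
      (continuous_apply i).continuousOn fun _ hx => (hx i).ne'

end CollatzWielandt

section Perron

variable {n : ℕ} [Nonempty (Fin n)] {B : Matrix (Fin n) (Fin n) ℝ}

lemma collatzWielandt_lt_pow_mulVec (hB : ∀ i j, 0 ≤ B i j) (hirr : MatIrreducible B)
    {v : Fin n → ℝ} (hv : ∀ i, 0 < v i) (hne : B *ᵥ v ≠ collatzWielandt B v • v) :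
    collatzWielandt B v < collatzWielandt B ((1 + B) ^ (n - 1) *ᵥ v) := by
  set r := collatzWielandt B v
  set P := (1 + B) ^ (n - 1)
  -- `P` commutes with `B` and makes the nonzero defect `B v - r v ≥ 0` strictly positive.
  have hd : 0 ≤ B *ᵥ v - r • v := fun i =>
    sub_nonneg.2 (by simpa [mul_comm] using collatzWielandt_mul_le hv i)
  have hPd := pow_mulVec_pos hB hirr hd (sub_ne_zero.2 hne)
  have hcomm : P *ᵥ (B *ᵥ v) = B *ᵥ (P *ᵥ v) := by
    rw [mulVec_mulVec, mulVec_mulVec, (((Commute.one_left B).add_left (.refl B)).pow_left _).eq]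
  have hv0 : v ≠ 0 := fun h => (hv (Classical.arbitrary _)).ne' (congrFun h _)
  refine lt_collatzWielandt (pow_mulVec_pos hB hirr (fun i => (hv i).le) hv0) fun i => ?_
  simpa [mulVec_sub, hcomm, mulVec_smul, P] using hPd i

theorem exists_pos_mulVec_eq_smul (hB : ∀ i j, 0 ≤ B i j) (hirr : MatIrreducible B) :
    ∃ (r : ℝ) (v : Fin n → ℝ), (∀ i, 0 < v i) ∧ B *ᵥ v = r • v := by
  set P := (1 + B) ^ (n - 1)
  have hP : ∀ x ∈ stdSimplex ℝ (Fin n), ∀ i, 0 < (P *ᵥ x) i := fun x hx =>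
    pow_mulVec_pos hB hirr hx.1 fun h => by simpa [h] using hx.2
  obtain ⟨x, hx, hmax⟩ := (isCompact_stdSimplex ℝ (Fin n)).exists_isMaxOn
    ⟨_, single_mem_stdSimplex ℝ (Classical.arbitrary _)⟩
    ((continuousOn_collatzWielandt (B := B)).comp
      (continuous_const.matrix_mulVec continuous_id).continuousOn hP)
  set v := P *ᵥ x
  have hv : ∀ i, 0 < v i := hP x hx
  -- Otherwise `P v`, rescaled into the simplex, would beat the maximiser `x`.
  refine ⟨collatzWielandt B v, v, hv, by_contra fun hne => ?_⟩
  have hsum : 0 < ∑ i, v i := sum_pos (fun i _ => hv i) univ_nonempty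
  set c := (∑ i, v i)⁻¹
  have hc : 0 < c := inv_pos.2 hsum
  have hcv : c • v ∈ stdSimplex ℝ (Fin n) :=
    ⟨fun i => (mul_pos hc (hv i)).le, by simp [c, ← mul_sum, inv_mul_cancel₀ hsum.ne']⟩
  have hle : collatzWielandt B (P *ᵥ (c • v)) ≤ collatzWielandt B v := isMaxOn_iff.1 hmax _ hcv
  rw [mulVec_smul, collatzWielandt_smul hc] at hle
  exact (collatzWielandt_lt_pow_mulVec hB hirr hv hne).not_ge hle

theorem exists_eq_smul_of_mulVec_eq_smul (hB : ∀ i j, 0 ≤ B i j) (hirr : MatIrreducible B)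
    {r : ℝ} {v x : Fin n → ℝ} (hv : ∀ i, 0 < v i) (hBv : B *ᵥ v = r • v)
    (hBx : B *ᵥ x = r • x) : ∃ t : ℝ, x = t • v := by
  -- `x - t v`, with `t` the largest value keeping it nonnegative, is an eigenvector with a
  -- zero entry, which `pow_mulVec_pos` forbids unless it vanishes.
  obtain ⟨i₀, -, hi₀⟩ := exists_mem_eq_inf' univ_nonempty fun i => x i / v i
  set t := univ.inf' univ_nonempty fun i => x i / v i
  set y := x - t • v
  have hy : 0 ≤ y := fun i =>
    sub_nonneg.2 ((le_div_iff₀ (hv i)).1 (inf'_le (fun i => x i / v i) (mem_univ i)))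
  have hy₀ : y i₀ = 0 := by simp [y, hi₀, div_mul_cancel₀ _ (hv i₀).ne']
  have hBy : (1 + B) *ᵥ y = (1 + r) • y := by
    rw [add_mulVec, one_mulVec, mulVec_sub, mulVec_smul, hBx, hBv, smul_comm t r v, ← smul_sub,
      add_smul, one_smul]
  refine ⟨t, sub_eq_zero.1 (by_contra fun hy0 => ?_)⟩
  have hpos := pow_mulVec_pos hB hirr hy hy0 i₀
  rw [pow_mulVec_eq_smul_of_mulVec_eq_smul hBy, Pi.smul_apply, hy₀, smul_zero] at hpos
  exact hpos.false

end Perron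

section Spectrum

variable {ι : Type*} [Fintype ι]

lemma norm_le_of_vecMul_eq_smul {B : Matrix ι ι ℝ} (hB : ∀ i j, 0 ≤ B i j) {r : ℝ}
    {w : ι → ℝ} (hw : ∀ i, 0 < w i) (hwB : w ᵥ* B = r • w) {μ : ℂ} {x : ι → ℂ} (hx0 : x ≠ 0)
    (hx : B.map (fun r => (r : ℂ)) *ᵥ x = μ • x) : ‖μ‖ ≤ r := by
  set y : ι → ℝ := fun i => ‖x i‖
  have hμy : ‖μ‖ • y ≤ B *ᵥ y := fun i => calc
    ‖μ‖ * ‖x i‖ = ‖∑ j, (B i j : ℂ) * x j‖ := by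
      rw [← norm_mul, ← smul_eq_mul, ← Pi.smul_apply, ← hx]; rfl
    _ ≤ ∑ j, B i j * ‖x j‖ :=
      (norm_sum_le _ _).trans_eq (by simp [abs_of_nonneg (hB i _)])
  have hwy : 0 < w ⬝ᵥ y := by
    obtain ⟨i, hi⟩ := Function.ne_iff.1 hx0
    exact sum_pos' (fun j _ => mul_nonneg (hw j).le (norm_nonneg _))
      ⟨i, mem_univ i, mul_pos (hw i) (norm_pos_iff.2 hi)⟩
  refine le_of_mul_le_mul_right ?_ hwy
  calc ‖μ‖ * (w ⬝ᵥ y) = w ⬝ᵥ (‖μ‖ • y) := by rw [dotProduct_smul, smul_eq_mul]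
    _ ≤ w ⬝ᵥ (B *ᵥ y) := dotProduct_le_dotProduct_of_nonneg_left hμy fun i => (hw i).le
    _ = r * (w ⬝ᵥ y) := by rw [dotProduct_mulVec, hwB, smul_dotProduct, smul_eq_mul]

lemma eq_of_mulVec_eq_smul_of_vecMul_eq_smul {R : Type*} [CommRing R] [IsDomain R]
    {M : Matrix ι ι R} {a b : R} {v w : ι → R} (hv : M *ᵥ v = a • v) (hw : w ᵥ* M = b • w)
    (hwv : w ⬝ᵥ v ≠ 0) : a = b :=
  mul_right_cancel₀ hwv <| calc
    a * (w ⬝ᵥ v) = w ⬝ᵥ (M *ᵥ v) := by rw [hv, dotProduct_smul, smul_eq_mul]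
    _ = b * (w ⬝ᵥ v) := by rw [dotProduct_mulVec, hw, smul_dotProduct, smul_eq_mul]

lemma mem_spectrum_iff_exists_mulVec_eq_smul [DecidableEq ι] {K : Type*} [Field K]
    {M : Matrix ι ι K} {μ : K} : μ ∈ spectrum K M ↔ ∃ x ≠ 0, M *ᵥ x = μ • x := by
  simp [← spectrum_toLin', ← Module.End.hasEigenvalue_iff_mem_spectrum,
    Module.End.hasEigenvalue_iff, Submodule.ne_bot_iff, and_comm]

lemma ofReal_mulVec_eq_smul {M : Matrix ι ι ℝ} {s : ℝ} {x : ι → ℝ} (h : M *ᵥ x = s • x) :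
    M.map (fun r => (r : ℂ)) *ᵥ (fun i => (x i : ℂ)) = (s : ℂ) • fun i => (x i : ℂ) := by
  ext i
  rw [Pi.smul_apply, smul_eq_mul, ← Complex.ofReal_mul, ← smul_eq_mul, ← Pi.smul_apply, ← h]
  exact (RingHom.map_mulVec Complex.ofRealHom M x i).symm

lemma ofReal_vecMul_eq_smul {M : Matrix ι ι ℝ} {s : ℝ} {x : ι → ℝ} (h : x ᵥ* M = s • x) :
    (fun i => (x i : ℂ)) ᵥ* M.map (fun r => (r : ℂ)) = (s : ℂ) • fun i => (x i : ℂ) := by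
  ext i
  rw [Pi.smul_apply, smul_eq_mul, ← Complex.ofReal_mul, ← smul_eq_mul, ← Pi.smul_apply, ← h]
  exact (RingHom.map_vecMul Complex.ofRealHom M x i).symm

lemma exists_eq_smul_ofReal_of_mulVec_eq_smul {M : Matrix ι ι ℝ} {s : ℝ} {v : ι → ℝ}
    (h : ∀ x, M *ᵥ x = s • x → ∃ t : ℝ, x = t • v) {z : ι → ℂ}
    (hz : M.map (fun r => (r : ℂ)) *ᵥ z = (s : ℂ) • z) :
    ∃ a : ℂ, z = a • fun i => (v i : ℂ) := by
  have hre : M *ᵥ (fun i => (z i).re) = s • fun i => (z i).re := by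
    ext i; simpa [mulVec, dotProduct, Complex.re_sum] using congrArg Complex.re (congrFun hz i)
  have him : M *ᵥ (fun i => (z i).im) = s • fun i => (z i).im := by
    ext i; simpa [mulVec, dotProduct, Complex.im_sum] using congrArg Complex.im (congrFun hz i)
  obtain ⟨a, ha⟩ := h _ hre
  obtain ⟨b, hb⟩ := h _ him
  refine ⟨a + b * Complex.I, funext fun i => ?_⟩
  rw [← Complex.re_add_im (z i), congrFun ha i, congrFun hb i]
  simp only [Pi.smul_apply, smul_eq_mul, Complex.ofReal_mul]
  ring

end Spectrum

theorem Module.End.maxGenEigenspace_eq_span_singleton {K V : Type*} [Field K] [AddCommGroup V]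
    [Module K V] {f : Module.End K V} {μ : K} {v : V} (hv : f.eigenspace μ = K ∙ v)
    (φ : V →ₗ[K] K) (hφ : ∀ x, φ (f x) = μ * φ x) (hφv : φ v ≠ 0) :
    f.maxGenEigenspace μ = K ∙ v := by
  refine le_antisymm (fun z hz => ?_) (hv ▸ eigenspace_le_maxGenEigenspace)
  obtain ⟨k, hk⟩ := (mem_maxGenEigenspace f μ z).1 hz
  clear hz
  induction k generalizing z with
  | zero => simp_all
  | succ k ih =>
    set g := f - μ • (1 : Module.End K V)
    obtain ⟨a, ha⟩ := Submodule.mem_span_singleton.1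
      (ih (g z) (by rwa [← Module.End.mul_apply, ← pow_succ]))
    have hφg : φ (g z) = 0 := by simp [g, hφ]
    rw [← ha, map_smul, smul_eq_mul, mul_eq_zero, or_iff_left hφv] at hφg
    rw [hφg, zero_smul, eq_comm, LinearMap.sub_apply, sub_eq_zero] at ha
    exact hv ▸ Module.End.mem_eigenspace_iff.2 (by simpa using ha)

theorem Matrix.rootMultiplicity_charpoly_eq_one {ι K : Type*} [Fintype ι] [DecidableEq ι]
    [Field K] {M : Matrix ι ι K} {μ : K} {v w : ι → K} (hMv : M *ᵥ v = μ • v)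
    (hker : ∀ x, M *ᵥ x = μ • x → ∃ a : K, x = a • v) (hwM : w ᵥ* M = μ • w)
    (hwv : w ⬝ᵥ v ≠ 0) : M.charpoly.rootMultiplicity μ = 1 := by
  have heig : Module.End.eigenspace (toLin' M) μ = K ∙ v := by
    ext x
    rw [Module.End.mem_eigenspace_iff, toLin'_apply, Submodule.mem_span_singleton]
    refine ⟨fun hx => ?_, ?_⟩
    · obtain ⟨a, rfl⟩ := hker x hx
      exact ⟨a, rfl⟩
    · rintro ⟨a, rfl⟩
      rw [mulVec_smul, hMv, smul_comm]
  have hφ (x : ι → K) : w ⬝ᵥ (M *ᵥ x) = μ * (w ⬝ᵥ x) := by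
    rw [dotProduct_mulVec, hwM, smul_dotProduct, smul_eq_mul]
  have hv0 : v ≠ 0 := by rintro rfl; simp at hwv
  rw [← charpoly_toLin', ← LinearMap.finrank_maxGenEigenspace_eq,
    Module.End.maxGenEigenspace_eq_span_singleton heig (dotProductBilin K K w) hφ hwv,
    finrank_span_singleton hv0]

section OffDiagNonneg

variable {ι : Type*} [DecidableEq ι]

lemma map_ofReal_add_smul_one (A : Matrix ι ι ℝ) (c : ℝ) :
    (A + c • 1).map (fun r => (r : ℂ)) = A.map (fun r => (r : ℂ)) + (c : ℂ) • 1 := by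
  ext i j
  rcases eq_or_ne i j with rfl | hij <;> simp [one_apply_ne, *]

variable [Fintype ι] {R : Type*} [CommRing R]

lemma add_smul_one_mulVec_eq_smul_iff {M : Matrix ι ι R} {c μ : R} {x : ι → R} :
    (M + c • 1) *ᵥ x = (μ + c) • x ↔ M *ᵥ x = μ • x := by
  rw [add_mulVec, smul_mulVec, one_mulVec, add_smul, add_left_inj]

lemma vecMul_add_smul_one_eq_smul_iff {M : Matrix ι ι R} {c μ : R} {x : ι → R} :
    x ᵥ* (M + c • 1) = (μ + c) • x ↔ x ᵥ* M = μ • x := by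
  rw [vecMul_add, vecMul_smul, vecMul_one, add_smul, add_left_inj]

variable {A : Matrix ι ι ℝ}

lemma exists_nonneg_add_smul_one (hoff : ∀ i j, i ≠ j → 0 ≤ A i j) :
    ∃ c : ℝ, ∀ i j, 0 ≤ (A + c • 1) i j := by
  refine ⟨∑ i, |A i i|, fun i j => ?_⟩
  rcases eq_or_ne i j with rfl | hij
  · have := single_le_sum (fun k _ => abs_nonneg (A k k)) (mem_univ i)
    simp only [Matrix.add_apply, Matrix.smul_apply, one_apply_eq, smul_eq_mul, mul_one]
    linarith [neg_abs_le (A i i)]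
  · simpa [one_apply_ne hij] using hoff i j hij

theorem eq_or_re_lt_of_mem_spectrum (hoff : ∀ i j, i ≠ j → 0 ≤ A i j) {s : ℝ} {w : ι → ℝ}
    (hw : ∀ i, 0 < w i) (hwA : w ᵥ* A = s • w) {μ : ℂ}
    (hμ : μ ∈ spectrum ℂ (A.map (fun r => (r : ℂ)))) : μ = s ∨ μ.re < s := by
  obtain ⟨x, hx0, hx⟩ := mem_spectrum_iff_exists_mulVec_eq_smul.1 hμ
  obtain ⟨c, hc⟩ := exists_nonneg_add_smul_one hoff
  have hBx : (A + c • 1).map (fun r => (r : ℂ)) *ᵥ x = (μ + c) • x := by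
    rw [map_ofReal_add_smul_one]
    exact add_smul_one_mulVec_eq_smul_iff.2 hx
  have hle := norm_le_of_vecMul_eq_smul hc hw (vecMul_add_smul_one_eq_smul_iff.2 hwA) hx0 hBx
  -- If `Re μ ≥ s` then `Re (μ + c) = ‖μ + c‖`, which forces `μ + c` to be real.
  refine (lt_or_ge μ.re s).symm.imp (fun hge => ?_) id
  have hre : (μ + c).re = ‖μ + c‖ := le_antisymm (Complex.re_le_norm _) (by simp; linarith)
  have him : μ.im = 0 := by
    simpa [eq_comm] using (Complex.nonneg_iff.1 (Complex.re_eq_norm.1 hre)).2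
  exact Complex.ext (by simp at hre ⊢; linarith) (by simpa using him)

end OffDiagNonneg

section MetzlerPerron

variable {n : ℕ} [Nonempty (Fin n)] {A : Matrix (Fin n) (Fin n) ℝ}

theorem exists_pos_mulVec_eq_smul_of_offDiag_nonneg (hoff : ∀ i j, i ≠ j → 0 ≤ A i j)
    (hirr : MatIrreducible A) : ∃ (s : ℝ) (v : Fin n → ℝ), (∀ i, 0 < v i) ∧ A *ᵥ v = s • v := by
  obtain ⟨c, hc⟩ := exists_nonneg_add_smul_one hoff
  obtain ⟨r, v, hv, hBv⟩ := exists_pos_mulVec_eq_smul hc (hirr.add_smul_one c)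
  exact ⟨r - c, v, hv, add_smul_one_mulVec_eq_smul_iff.1 (by rwa [sub_add_cancel])⟩

theorem exists_pos_mulVec_eq_smul_and_vecMul_eq_smul (hoff : ∀ i j, i ≠ j → 0 ≤ A i j)
    (hirr : MatIrreducible A) : ∃ (s : ℝ) (v w : Fin n → ℝ), (∀ i, 0 < v i) ∧ (∀ i, 0 < w i) ∧
      A *ᵥ v = s • v ∧ w ᵥ* A = s • w := by
  obtain ⟨s, v, hv, hAv⟩ := exists_pos_mulVec_eq_smul_of_offDiag_nonneg hoff hirr
  obtain ⟨s', w, hw, hAw⟩ := exists_pos_mulVec_eq_smul_of_offDiag_nonneg (A := Aᵀ)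
    (fun i j hij => hoff j i hij.symm) hirr.transpose
  rw [mulVec_transpose] at hAw
  obtain rfl : s = s' := eq_of_mulVec_eq_smul_of_vecMul_eq_smul hAv hAw
    (sum_pos (fun i _ => mul_pos (hw i) (hv i)) univ_nonempty).ne'
  exact ⟨s, v, w, hv, hw, hAv, hAw⟩

theorem exists_eq_smul_of_offDiag_nonneg (hoff : ∀ i j, i ≠ j → 0 ≤ A i j)
    (hirr : MatIrreducible A) {s : ℝ} {v x : Fin n → ℝ} (hv : ∀ i, 0 < v i)
    (hAv : A *ᵥ v = s • v) (hAx : A *ᵥ x = s • x) : ∃ t : ℝ, x = t • v := by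
  obtain ⟨c, hc⟩ := exists_nonneg_add_smul_one hoff
  exact exists_eq_smul_of_mulVec_eq_smul hc (hirr.add_smul_one c) hv
    (add_smul_one_mulVec_eq_smul_iff.2 hAv) (add_smul_one_mulVec_eq_smul_iff.2 hAx)

theorem rootMultiplicity_charpoly_map_ofReal_eq_one (hoff : ∀ i j, i ≠ j → 0 ≤ A i j)
    (hirr : MatIrreducible A) {s : ℝ} {v w : Fin n → ℝ} (hv : ∀ i, 0 < v i)
    (hw : ∀ i, 0 < w i) (hAv : A *ᵥ v = s • v) (hwA : w ᵥ* A = s • w) :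
    (A.map (fun r => (r : ℂ))).charpoly.rootMultiplicity (s : ℂ) = 1 := by
  refine rootMultiplicity_charpoly_eq_one (ofReal_mulVec_eq_smul hAv)
    (fun z hz => exists_eq_smul_ofReal_of_mulVec_eq_smul
      (fun x hx => exists_eq_smul_of_offDiag_nonneg hoff hirr hv hAv hx) hz)
    (ofReal_vecMul_eq_smul hwA) ?_
  have hwv : 0 < w ⬝ᵥ v := sum_pos (fun i _ => mul_pos (hw i) (hv i)) univ_nonempty
  simpa [dotProduct, ← Complex.ofReal_mul, ← Complex.ofReal_sum] using hwv.ne'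

end MetzlerPerron

theorem spectral_bound_simple_dominant_general (n : ℕ)
    (A : Matrix (Fin n) (Fin n) ℝ)
    (hoff : ∀ i j, i ≠ j → 0 ≤ A i j)
    (hirr : MatIrreducible A)
    (s : ℝ)
    (hs : IsGreatest {x : ℝ | ∃ μ ∈ spectrum ℂ (A.map (fun r => (r : ℂ))), x = μ.re} s) :
    (s : ℂ) ∈ spectrum ℂ (A.map (fun r => (r : ℂ))) ∧
    (A.map (fun r => (r : ℂ))).charpoly.rootMultiplicity (s : ℂ) = 1 ∧
    ∀ μ ∈ spectrum ℂ (A.map (fun r => (r : ℂ))), μ ≠ (s : ℂ) → μ.re < s := by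
  obtain ⟨μ, hμ, -⟩ := hs.1
  obtain ⟨x, hx0, -⟩ := mem_spectrum_iff_exists_mulVec_eq_smul.1 hμ
  have : Nonempty (Fin n) := let ⟨i, _⟩ := Function.ne_iff.1 hx0; ⟨i⟩
  obtain ⟨s₀, v, w, hv, hw, hAv, hwA⟩ := exists_pos_mulVec_eq_smul_and_vecMul_eq_smul hoff hirr
  have hs₀ : (s₀ : ℂ) ∈ spectrum ℂ (A.map (fun r => (r : ℂ))) :=
    mem_spectrum_iff_exists_mulVec_eq_smul.2
      ⟨_, fun h => (hv (Classical.arbitrary _)).ne' (by simpa using congrFun h _),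
        ofReal_mulVec_eq_smul hAv⟩
  have hdom : ∀ μ ∈ spectrum ℂ (A.map (fun r => (r : ℂ))), μ = s₀ ∨ μ.re < s₀ :=
    fun _ => eq_or_re_lt_of_mem_spectrum hoff hw hwA
  obtain rfl : s = s₀ := hs.unique ⟨⟨s₀, hs₀, (Complex.ofReal_re s₀).symm⟩, by
    rintro _ ⟨μ, hμ, rfl⟩
    rcases hdom μ hμ with rfl | h
    exacts [(Complex.ofReal_re s₀).le, h.le]⟩
  exact ⟨hs₀, rootMultiplicity_charpoly_map_ofReal_eq_one hoff hirr hv hw hAv hwA,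
    fun μ hμ hne => (hdom μ hμ).resolve_left hne⟩

/-- If `A` is an irreducible real `n×n` matrix with nonnegative
off-diagonal entries, then the spectral bound `s(A)` is an eigenvalue of algebraic
multiplicity one, and every other eigenvalue `λ` satisfies `Re λ < s(A)`. -/
theorem spectral_bound_simple_dominant (n : ℕ) (hn : 0 < n)
    (A : Matrix (Fin n) (Fin n) ℝ)
    (hoff : ∀ i j, i ≠ j → 0 ≤ A i j)
    (hirr : MatIrreducible A)
    (s : ℝ)
    (hs : IsGreatest {x : ℝ | ∃ μ ∈ spectrum ℂ (A.map (fun r => (r : ℂ))), x = μ.re} s) :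
    (s : ℂ) ∈ spectrum ℂ (A.map (fun r => (r : ℂ))) ∧
    (A.map (fun r => (r : ℂ))).charpoly.rootMultiplicity (s : ℂ) = 1 ∧
    ∀ μ ∈ spectrum ℂ (A.map (fun r => (r : ℂ))), μ ≠ (s : ℂ) → μ.re < s :=
  spectral_bound_simple_dominant_general n A hoff hirr s hs
end

section
/- If T is an irreducible n×n matrix with nonnegative off-diagonal entries such that every column sum of T is ≤ 0 and at least one column sum is strictly negative, then every eigenvalue of T has strictly negative real part; in particular T is invertible. -/
open Matrix

/-! Let `x` be a left eigenvector of `T` for an eigenvalue `μ` with `0 ≤ re μ`, and `j` an index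
where `‖x j‖` is maximal. Taking real parts in `μ = ∑ i, T i j * (x i / x j)` and comparing with
`∑ i, T i j ≤ 0` forces column `j` to sum to zero and `‖x i‖ = ‖x j‖` whenever `T i j ≠ 0`.
By irreducibility `‖x‖` is then constant, so every column sums to zero, contradicting the
strictly negative one. -/

theorem Matrix.exists_vecMul_eq_smul_of_mem_spectrum {ι K : Type*} [Fintype ι] [DecidableEq ι]
    [Field K] {M : Matrix ι ι K} {μ : K} (h : μ ∈ spectrum K M) :
    ∃ x ≠ 0, x ᵥ* M = μ • x := by
  rw [spectrum.mem_iff, isUnit_iff_isUnit_det, isUnit_iff_ne_zero, not_not,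
    ← exists_vecMul_eq_zero_iff] at h
  obtain ⟨x, hx, hxM⟩ := h
  refine ⟨x, hx, ?_⟩
  rw [vecMul_sub, sub_eq_zero, Algebra.algebraMap_eq_smul_one, vecMul_smul, vecMul_one] at hxM
  exact hxM.symm

theorem MatIrreducible.forall_mem_of_closed {n : ℕ} {A : Matrix (Fin n) (Fin n) ℝ}
    (hA : MatIrreducible A) {S : Set (Fin n)} (hS : S.Nonempty)
    (hclosed : ∀ j ∈ S, ∀ i, A i j ≠ 0 → i ∈ S) (i : Fin n) : i ∈ S := by
  by_contra hi
  refine hA ⟨Sᶜ, ⟨i, hi⟩, by rwa [compl_compl], fun k hk j hj => ?_⟩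
  by_contra hkj
  exact hk (hclosed j (not_not.mp hj) k hkj)

theorem colSum_eq_zero_and_eq_one_of_weighted_colSum_nonneg {ι : Type*} [Fintype ι]
    {T : Matrix ι ι ℝ} (hoff : ∀ i j, i ≠ j → 0 ≤ T i j) {j : ι} (hcol : ∑ i, T i j ≤ 0)
    {c : ι → ℝ} (hc : ∀ i, c i ≤ 1) (hcj : c j = 1) (hpos : 0 ≤ ∑ i, T i j * c i) :
    ∑ i, T i j = 0 ∧ ∀ i, T i j ≠ 0 → c i = 1 := by
  have hterm : ∀ i, 0 ≤ T i j * (1 - c i) := fun i => by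
    rcases eq_or_ne i j with rfl | hij
    · simp [hcj]
    · exact mul_nonneg (hoff i j hij) (by linarith [hc i])
  have hsum : ∑ i, T i j * (1 - c i) = ∑ i, T i j - ∑ i, T i j * c i := by
    simp only [mul_sub, mul_one, Finset.sum_sub_distrib]
  have hzero : ∑ i, T i j * (1 - c i) = 0 :=
    le_antisymm (by linarith) (Finset.sum_nonneg fun i _ => hterm i)
  refine ⟨by linarith, fun i hi => ?_⟩
  have := (Finset.sum_eq_zero_iff_of_nonneg fun i _ => hterm i).mp hzero i (Finset.mem_univ i)
  have := (mul_eq_zero.mp this).resolve_left hi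
  linarith

theorem colSum_eq_zero_and_norm_eq_of_vecMul_eq_smul {ι : Type*} [Fintype ι] {T : Matrix ι ι ℝ}
    (hoff : ∀ i j, i ≠ j → 0 ≤ T i j) {j : ι} (hcol : ∑ i, T i j ≤ 0)
    {μ : ℂ} (hμ : 0 ≤ μ.re) {x : ι → ℂ} (hx0 : x ≠ 0) (hx : x ᵥ* T.map (↑) = μ • x)
    (hmax : ∀ i, ‖x i‖ ≤ ‖x j‖) :
    ∑ i, T i j = 0 ∧ ∀ i, T i j ≠ 0 → ‖x i‖ = ‖x j‖ := by
  obtain ⟨k, hk⟩ := Function.ne_iff.mp hx0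
  have hxj_pos : 0 < ‖x j‖ := (norm_pos_iff.mpr hk).trans_le (hmax k)
  have hxj : x j ≠ 0 := norm_pos_iff.mp hxj_pos
  have hratio : ∀ i, (x i / x j).re ≤ ‖x i‖ / ‖x j‖ := fun i =>
    (Complex.re_le_norm _).trans_eq (norm_div _ _)
  have hweighted : ∑ i, T i j * (x i / x j).re = μ.re := by
    have hj : ∑ i, x i * T i j = μ * x j := by
      simpa [vecMul, dotProduct] using congrFun hx j
    calc ∑ i, T i j * (x i / x j).re = (∑ i, x i * T i j / x j).re := by
          rw [Complex.re_sum]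
          exact Finset.sum_congr rfl fun i _ => by
            rw [mul_div_right_comm, Complex.re_mul_ofReal, mul_comm]
      _ = μ.re := by rw [← Finset.sum_div, hj, mul_div_cancel_right₀ _ hxj]
  obtain ⟨hsum, hsupp⟩ := colSum_eq_zero_and_eq_one_of_weighted_colSum_nonneg hoff hcol
    (c := fun i => (x i / x j).re)
    (fun i => (hratio i).trans ((div_le_one hxj_pos).mpr (hmax i)))
    (by simp [div_self hxj]) (hweighted ▸ hμ)
  refine ⟨hsum, fun i hi => le_antisymm (hmax i) ?_⟩
  have := (hsupp i hi).symm.le.trans (hratio i)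
  rwa [one_le_div hxj_pos] at this

theorem re_neg_of_vecMul_eq_smul {n : ℕ} {T : Matrix (Fin n) (Fin n) ℝ}
    (hoff : ∀ i j, i ≠ j → 0 ≤ T i j) (hcol : ∀ j, ∑ i, T i j ≤ 0)
    (hirr : MatIrreducible T) (hleak : ∃ j, ∑ i, T i j < 0)
    {μ : ℂ} {x : Fin n → ℂ} (hx0 : x ≠ 0) (hx : x ᵥ* T.map (↑) = μ • x) : μ.re < 0 := by
  by_contra! hμ
  have : Nonempty (Fin n) := let ⟨j, _⟩ := hleak; ⟨j⟩
  obtain ⟨j₀, hj₀⟩ := Finite.exists_max fun i => ‖x i‖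
  have hmax (j : Fin n) (hj : ‖x j‖ = ‖x j₀‖) :=
    colSum_eq_zero_and_norm_eq_of_vecMul_eq_smul hoff (hcol j) hμ hx0 hx fun i => hj ▸ hj₀ i
  have hconst : ∀ i, i ∈ {i | ‖x i‖ = ‖x j₀‖} :=
    hirr.forall_mem_of_closed ⟨j₀, rfl⟩ fun j hj i hi => ((hmax j hj).2 i hi).trans hj
  obtain ⟨j, hj⟩ := hleak
  exact hj.ne (hmax j (hconst j)).1

theorem strictly_substochastic_irreducible_spectrum_neg_general (n : ℕ)
    (T : Matrix (Fin n) (Fin n) ℝ)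
    (hoff : ∀ i j, i ≠ j → 0 ≤ T i j)
    (hcol : ∀ j, ∑ i, T i j ≤ 0)
    (hirr : MatIrreducible T)
    (hleak : ∃ j, ∑ i, T i j < 0) :
    (∀ μ ∈ spectrum ℂ (T.map (fun r => (r : ℂ))), μ.re < 0) ∧ IsUnit T.det := by
  have hspec : ∀ μ ∈ spectrum ℂ (T.map (fun r => (r : ℂ))), μ.re < 0 := fun μ hμ => by
    obtain ⟨x, hx0, hx⟩ := exists_vecMul_eq_smul_of_mem_spectrum hμ
    exact re_neg_of_vecMul_eq_smul hoff hcol hirr hleak hx0 hx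
  refine ⟨hspec, ?_⟩
  have h0 : (0 : ℂ) ∉ spectrum ℂ (T.map (fun r => (r : ℂ))) := fun h => (hspec 0 h).false
  rw [spectrum.zero_mem_iff, not_not, isUnit_iff_isUnit_det] at h0
  exact (isUnit_map_iff Complex.ofRealHom _).mp (RingHom.map_det Complex.ofRealHom T ▸ h0)

/-- If `T` is an irreducible `n×n` matrix with nonnegative off-diagonal
entries, every column sum `≤ 0`, and some column sum strictly negative, then every
eigenvalue of `T` has strictly negative real part; in particular `T` is invertible. -/
theorem strictly_substochastic_irreducible_spectrum_neg (n : ℕ) (hn : 0 < n)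
    (T : Matrix (Fin n) (Fin n) ℝ)
    (hoff : ∀ i j, i ≠ j → 0 ≤ T i j)
    (hcol : ∀ j, ∑ i, T i j ≤ 0)
    (hirr : MatIrreducible T)
    (hleak : ∃ j, ∑ i, T i j < 0) :
    (∀ μ ∈ spectrum ℂ (T.map (fun r => (r : ℂ))), μ.re < 0) ∧ IsUnit T.det :=
  strictly_substochastic_irreducible_spectrum_neg_general n T hoff hcol hirr hleak
end

section
/- If C is an irreducible Kolmogorov matrix with normalized positive right null vector k (Ck = 0, ∑k_i = 1), then for every probability vector u₀ (nonnegative entries summing to 1), e^{tC} u₀ converges to k as t → ∞. -/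
open Matrix

/-!
Write `P t = exp (t • C)`. Shifting `C` by a multiple of the identity makes it entrywise
nonnegative, so every `P t` with `t ≥ 0` is column-stochastic, and irreducibility makes
`P 1` strictly positive. A column-stochastic matrix whose entries are all `≥ δ` contracts the
`ℓ¹` norm of zero-sum vectors by the factor `1 - n δ < 1` (Dobrushin). Since `P` is a semigroup
fixing `k`, the zero-sum vector `P t (u₀ - k) = P t u₀ - k` decays geometrically in `⌊t⌋`.
-/

open NormedSpace Filter Topology Finset

namespace Matrix

variable {ι : Type*} [Fintype ι] [DecidableEq ι]

open scoped Norms.Operator in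
theorem hasSum_exp (A : Matrix ι ι ℝ) :
    HasSum (fun m : ℕ => (m.factorial : ℝ)⁻¹ • A ^ m) (exp A) :=
  exp_series_hasSum_exp' A

theorem hasSum_exp_apply (A : Matrix ι ι ℝ) (i j : ι) :
    HasSum (fun m : ℕ => (m.factorial : ℝ)⁻¹ * (A ^ m) i j) (exp A i j) :=
  Pi.hasSum.mp (Pi.hasSum.mp (hasSum_exp A) i) j

theorem exp_mulVec_of_mulVec_eq_zero {A : Matrix ι ι ℝ} {w : ι → ℝ} (h : A *ᵥ w = 0) :
    exp A *ᵥ w = w := by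
  refine ((hasSum_exp A).map (mulVec.addMonoidHomLeft w)
    (continuous_id.matrix_mulVec continuous_const)).unique ?_
  convert hasSum_single 0 fun m (hm : m ≠ 0) => ?_
  · change w = ((_ : ℝ) • A ^ 0) *ᵥ w
    simp
  · obtain ⟨m, rfl⟩ := Nat.exists_eq_succ_of_ne_zero hm
    change ((_ : ℝ) • A ^ (m + 1)) *ᵥ w = 0
    rw [smul_mulVec, pow_succ, ← mulVec_mulVec, h, mulVec_zero, smul_zero]

theorem exp_apply_nonneg {B : Matrix ι ι ℝ} (hB : ∀ i j, 0 ≤ B i j) (i j : ι) :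
    0 ≤ exp B i j :=
  (hasSum_exp_apply B i j).nonneg fun m => mul_nonneg (by positivity) (pow_apply_nonneg hB m i j)

theorem exp_apply_pos_of_pow_apply_pos {B : Matrix ι ι ℝ} (hB : ∀ i j, 0 ≤ B i j) {i j : ι}
    {m : ℕ} (hm : 0 < (B ^ m) i j) : 0 < exp B i j :=
  (show 0 < (m.factorial : ℝ)⁻¹ * (B ^ m) i j by positivity).trans_le <|
    le_hasSum (hasSum_exp_apply B i j) m fun m' _ =>
      mul_nonneg (by positivity) (pow_apply_nonneg hB m' i j)

theorem exp_smul_one (α : ℝ) : exp (α • (1 : Matrix ι ι ℝ)) = Real.exp α • 1 := by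
  rw [smul_one_eq_diagonal, exp_diagonal, Pi.exp_def, smul_one_eq_diagonal, Real.exp_eq_exp_ℝ]

theorem exp_eq_smul_exp_add_smul_one (A : Matrix ι ι ℝ) (α : ℝ) :
    exp A = Real.exp (-α) • exp (A + α • 1) := by
  rw [exp_add_of_commute _ _ ((Commute.one_right A).smul_right α), exp_smul_one, mul_smul_comm,
    mul_one, smul_smul, ← Real.exp_add, neg_add_cancel, Real.exp_zero, one_smul]

theorem exists_add_smul_one_nonneg {A : Matrix ι ι ℝ} (hA : ∀ i j, i ≠ j → 0 ≤ A i j) :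
    ∃ α : ℝ, ∀ i j, 0 ≤ (A + α • 1) i j := by
  refine ⟨∑ p, |A p p|, fun i j => ?_⟩
  rcases eq_or_ne i j with rfl | hij
  · have := single_le_sum (f := fun p => |A p p|) (fun p _ => abs_nonneg _) (mem_univ i)
    simp only [add_apply, smul_apply, one_apply_eq, smul_eq_mul, mul_one]
    linarith [neg_abs_le (A i i)]
  · simpa [hij] using hA i j hij

theorem exp_apply_nonneg_of_offDiag_nonneg {A : Matrix ι ι ℝ} (hA : ∀ i j, i ≠ j → 0 ≤ A i j)
    (i j : ι) : 0 ≤ exp A i j := by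
  obtain ⟨α, hα⟩ := exists_add_smul_one_nonneg hA
  rw [exp_eq_smul_exp_add_smul_one A α, smul_apply, smul_eq_mul]
  exact mul_nonneg (Real.exp_pos _).le (exp_apply_nonneg hα i j)

theorem exp_mem_colStochastic {A : Matrix ι ι ℝ} (hA : ∀ i j, i ≠ j → 0 ≤ A i j)
    (hcol : ∀ j, ∑ i, A i j = 0) : exp A ∈ colStochastic ℝ ι := by
  refine mem_colStochastic.mpr ⟨exp_apply_nonneg_of_offDiag_nonneg hA, ?_⟩
  have h : Aᵀ *ᵥ 1 = 0 := by ext j; simp [mulVec, dotProduct, hcol]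
  rw [← mulVec_transpose, ← exp_transpose, exp_mulVec_of_mulVec_eq_zero h]

/-- Dobrushin's bound: as `∑ v = 0`, lowering every entry of `P` by `δ` leaves `P *ᵥ v`
unchanged, and the lowered matrix is still nonnegative. -/
theorem sum_abs_mulVec_le_of_le_apply {P : Matrix ι ι ℝ} (hP : P ∈ colStochastic ℝ ι) {δ : ℝ}
    (hδ : ∀ i j, δ ≤ P i j) {v : ι → ℝ} (hv : ∑ i, v i = 0) :
    ∑ i, |(P *ᵥ v) i| ≤ (1 - Fintype.card ι * δ) * ∑ i, |v i| :=
  calc ∑ i, |(P *ᵥ v) i| = ∑ i, |∑ j, (P i j - δ) * v j| := by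
        simp only [mulVec, dotProduct, sub_mul, sum_sub_distrib, ← mul_sum, hv, mul_zero, sub_zero]
    _ ≤ ∑ i, ∑ j, (P i j - δ) * |v j| := sum_le_sum fun i _ =>
        (abs_sum_le_sum_abs _ _).trans_eq <| sum_congr rfl fun j _ => by
          rw [abs_mul, abs_of_nonneg (sub_nonneg.2 (hδ i j))]
    _ = ∑ j, (∑ i, P i j - Fintype.card ι * δ) * |v j| := by
        rw [Finset.sum_comm]
        refine sum_congr rfl fun j _ => ?_
        simp [sub_mul, sum_mul, sum_sub_distrib, mul_assoc]
    _ = _ := by simp [sum_col_of_mem_colStochastic hP, mul_sum]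

theorem exists_contraction_of_pos [Nonempty ι] {P : Matrix ι ι ℝ} (hP : P ∈ colStochastic ℝ ι)
    (hpos : ∀ i j, 0 < P i j) :
    ∃ r, 0 ≤ r ∧ r < 1 ∧
      ∀ v : ι → ℝ, ∑ i, v i = 0 → ∑ i, |(P *ᵥ v) i| ≤ r * ∑ i, |v i| := by
  obtain ⟨⟨i₀, j₀⟩, hmin⟩ := Finite.exists_min fun p : ι × ι => P p.1 p.2
  refine ⟨1 - Fintype.card ι * P i₀ j₀, ?_, ?_, fun v hv =>
    sum_abs_mulVec_le_of_le_apply hP (fun i j => hmin (i, j)) hv⟩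
  · have := sum_le_sum fun i (_ : i ∈ univ) => hmin (i, j₀)
    simp [sum_col_of_mem_colStochastic hP] at this
    linarith
  · have : (0 : ℝ) < Fintype.card ι := by exact_mod_cast Fintype.card_pos
    nlinarith [hpos i₀ j₀]

theorem sum_abs_pow_mulVec_le {P : Matrix ι ι ℝ} (hP : P ∈ colStochastic ℝ ι) {r : ℝ} (hr : 0 ≤ r)
    (hcontr : ∀ v : ι → ℝ, ∑ i, v i = 0 → ∑ i, |(P *ᵥ v) i| ≤ r * ∑ i, |v i|)
    {v : ι → ℝ} (hv : ∑ i, v i = 0) (m : ℕ) :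
    ∑ i, |(P ^ m *ᵥ v) i| ≤ r ^ m * ∑ i, |v i| := by
  induction m with
  | zero => simp
  | succ m ih =>
    rw [pow_succ' P, ← mulVec_mulVec, pow_succ' r, mul_assoc]
    refine (hcontr _ ?_).trans (mul_le_mul_of_nonneg_left ih hr)
    rw [sum_mulVec_of_mem_colStochastic (pow_mem hP m), hv]

theorem tendsto_exp_smul_mulVec_nhds_zero [Nonempty ι] {C : Matrix ι ι ℝ}
    (hoff : ∀ i j, i ≠ j → 0 ≤ C i j) (hcol : ∀ j, ∑ i, C i j = 0)
    (hpos : ∀ i j, 0 < exp C i j) {v : ι → ℝ} (hv : ∑ i, v i = 0) :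
    Tendsto (fun t : ℝ => exp (t • C) *ᵥ v) atTop (𝓝 0) := by
  have hstoch (t : ℝ) (ht : 0 ≤ t) : exp (t • C) ∈ colStochastic ℝ ι :=
    exp_mem_colStochastic (fun i j hij => mul_nonneg ht (hoff i j hij))
      (fun j => by simp [← mul_sum, hcol])
  have hP : exp C ∈ colStochastic ℝ ι := by simpa using hstoch 1 zero_le_one
  obtain ⟨r, hr0, hr1, hcontr⟩ := exists_contraction_of_pos hP hpos
  have hbound (t : ℝ) (ht : 0 ≤ t) : ‖exp (t • C) *ᵥ v‖ ≤ r ^ ⌊t⌋₊ * ∑ i, |v i| := by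
    have hsplit : exp (t • C) = exp ((t - ⌊t⌋₊) • C) * exp C ^ ⌊t⌋₊ := by
      rw [← exp_nsmul, ← exp_add_of_commute _ _ (((Commute.refl C).smul_left _).smul_right _),
        ← Nat.cast_smul_eq_nsmul ℝ, ← add_smul, sub_add_cancel]
    have hfrac := hstoch _ (sub_nonneg.2 (Nat.floor_le ht))
    calc ‖exp (t • C) *ᵥ v‖ ≤ ∑ i, |(exp (t • C) *ᵥ v) i| :=
          (pi_norm_le_iff_of_nonneg (by positivity)).2 fun i =>
            single_le_sum (f := fun i => |(exp (t • C) *ᵥ v) i|) (fun _ _ => abs_nonneg _)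
              (mem_univ i)
      _ ≤ ∑ i, |(exp C ^ ⌊t⌋₊ *ᵥ v) i| := by
        rw [hsplit, ← mulVec_mulVec]
        simpa only [mul_zero, sub_zero, one_mul] using
          sum_abs_mulVec_le_of_le_apply hfrac (δ := 0) hfrac.1 (by rw [sum_mulVec_of_mem_colStochastic (pow_mem hP ⌊t⌋₊), hv])
      _ ≤ r ^ ⌊t⌋₊ * ∑ i, |v i| := sum_abs_pow_mulVec_le hP hr0 hcontr hv _
  have hlim : Tendsto (fun t : ℝ => r ^ ⌊t⌋₊ * ∑ i, |v i|) atTop (𝓝 0) := by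
    simpa using ((tendsto_pow_atTop_nhds_zero_of_lt_one hr0 hr1).comp
      tendsto_nat_floor_atTop).mul_const (∑ i, |v i|)
  exact squeeze_zero_norm' ((eventually_ge_atTop 0).mono hbound) hlim

end Matrix

theorem MatIrreducible.congr_offDiag {n : ℕ} {A B : Matrix (Fin n) (Fin n) ℝ}
    (hA : MatIrreducible A) (hAB : ∀ i j, i ≠ j → A i j = B i j) : MatIrreducible B := by
  rintro ⟨S, hS, hSc, hB⟩
  exact hA ⟨S, hS, hSc, fun i hi j hj =>
    (hAB i j (ne_of_mem_of_not_mem hi hj)).trans (hB i hi j hj)⟩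

/-- Otherwise the indices `l` with `(B ^ m) l j = 0` for all `m` contradict irreducibility:
`B l p > 0` and `(B ^ m) p j > 0` would give `(B ^ (m + 1)) l j > 0`. -/
theorem MatIrreducible.exists_pow_apply_pos {n : ℕ} {B : Matrix (Fin n) (Fin n) ℝ}
    (hB : ∀ i j, 0 ≤ B i j) (hirr : MatIrreducible B) (i j : Fin n) :
    ∃ m : ℕ, 0 < (B ^ m) i j := by
  by_contra! h
  refine hirr ⟨{l | ∀ m : ℕ, (B ^ m) l j ≤ 0}, ⟨i, h⟩, ⟨j, fun hj => (hj 0).not_gt (by simp)⟩,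
    fun l hl p hp => ?_⟩
  obtain ⟨m, hm⟩ : ∃ m : ℕ, 0 < (B ^ m) p j := by simpa using hp
  have : B l p * (B ^ m) p j ≤ (B ^ (m + 1)) l j := by
    rw [pow_succ', mul_apply]
    exact single_le_sum (f := fun q => B l q * (B ^ m) q j)
      (fun q _ => mul_nonneg (hB l q) (pow_apply_nonneg hB m q j)) (mem_univ p)
  nlinarith [hl (m + 1), hB l p]

theorem Matrix.exp_apply_pos_of_matIrreducible {n : ℕ} {A : Matrix (Fin n) (Fin n) ℝ}
    (hA : ∀ i j, i ≠ j → 0 ≤ A i j) (hirr : MatIrreducible A) (i j : Fin n) :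
    0 < exp A i j := by
  obtain ⟨α, hα⟩ := exists_add_smul_one_nonneg hA
  obtain ⟨m, hm⟩ := (hirr.congr_offDiag fun i j hij => by simp [hij]).exists_pow_apply_pos hα i j
  rw [exp_eq_smul_exp_add_smul_one A α, smul_apply, smul_eq_mul]
  exact mul_pos (Real.exp_pos _) (exp_apply_pos_of_pow_apply_pos hα hm)

theorem kolmogorov_exp_converges_to_stable_structure_general (n : ℕ)
    (C : Matrix (Fin n) (Fin n) ℝ)
    (hoff : ∀ i j, i ≠ j → 0 ≤ C i j)
    (hcol : ∀ j, ∑ i, C i j = 0)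
    (hirr : MatIrreducible C)
    (k : Fin n → ℝ)
    (hCk : C.mulVec k = 0) (hksum : ∑ i, k i = 1)
    (u₀ : Fin n → ℝ) (hu₀sum : ∑ i, u₀ i = 1) :
    Filter.Tendsto (fun t : ℝ => (NormedSpace.exp (t • C)).mulVec u₀)
      Filter.atTop (nhds k) := by
  have : Nonempty (Fin n) :=
    univ_nonempty_iff.mp (nonempty_of_sum_ne_zero (hksum ▸ one_ne_zero))
  have hfix (t : ℝ) : exp (t • C) *ᵥ k = k :=
    exp_mulVec_of_mulVec_eq_zero (by rw [smul_mulVec, hCk, smul_zero])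
  have hdecay := tendsto_exp_smul_mulVec_nhds_zero hoff hcol
    (exp_apply_pos_of_matIrreducible hoff hirr) (v := u₀ - k)
    (by simp [sum_sub_distrib, hu₀sum, hksum])
  simpa [mulVec_sub, hfix] using hdecay.add_const k

/-- If `C` is an irreducible Kolmogorov matrix with normalized positive
right null vector `k`, then for every probability vector `u₀`, `e^{tC} u₀ → k` as
`t → ∞`. -/
theorem kolmogorov_exp_converges_to_stable_structure (n : ℕ) (hn : 0 < n)
    (C : Matrix (Fin n) (Fin n) ℝ)
    (hoff : ∀ i j, i ≠ j → 0 ≤ C i j)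
    (hcol : ∀ j, ∑ i, C i j = 0)
    (hirr : MatIrreducible C)
    (k : Fin n → ℝ)
    (hk : ∀ i, 0 < k i) (hCk : C.mulVec k = 0) (hksum : ∑ i, k i = 1)
    (u₀ : Fin n → ℝ) (hu₀ : ∀ i, 0 ≤ u₀ i) (hu₀sum : ∑ i, u₀ i = 1) :
    Filter.Tendsto (fun t : ℝ => (NormedSpace.exp (t • C)).mulVec u₀)
      Filter.atTop (nhds k) :=
  kolmogorov_exp_converges_to_stable_structure_general n C hoff hcol hirr k hCk hksum u₀ hu₀sum
end
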